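/- arXiv:2507.20898 — 2 statements merged into one kernel-verified Lean document; each statement's English description precedes it below -/
import Mathlib

section
/- For every β ∈ 𝒜 and all (t,x,μ) ∈ [0,T] × 𝒮, the Hamiltonian evaluated along v^β coincides with the infimum restricted to the ball of radius c_a: H(x,μ, Δ_x v^β(t,·,μ)) = inf { ℓ(x,μ,a) + Σ_{y≠x} (λ⁰_y(x,μ) + λ¹_y(x,μ) a_y) (Δ_x v^β(t,·,μ))_y : a ∈ ℝ_+^{d−1}, |a|₂ ≤ c_a }. -/
open scoped BigOperators Classical

noncomputable section

namespace NLLGame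

/-- Map the `i`-th off-diagonal index to the corresponding state `y ≠ x`
(the paper's convention: `a_y` for `y < x` and `a_{y-1}` for `y > x`). -/
def idxToState {d : ℕ} (x : Fin d) (i : Fin (d - 1)) : Fin d :=
  if h : (i : ℕ) < (x : ℕ) then ⟨(i : ℕ), Nat.lt_trans h x.isLt⟩
  else ⟨(i : ℕ) + 1, by have := i.isLt; omega⟩

/-- The discretized simplex `Σ^{d-1}_N`, represented by the vector of counts
`n_x = N μ_x` of the `N` untagged players across the `d` states. -/
def Simplex (d N : ℕ) : Type := {f : Fin d → Fin (N + 1) // ∑ x, (f x : ℕ) = N}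

instance (d N : ℕ) : Fintype (Simplex d N) := by unfold Simplex; infer_instance
instance (d N : ℕ) : DecidableEq (Simplex d N) := by unfold Simplex; infer_instance

/-- The state space `𝒮 = 𝒳 × Σ^{d-1}_N`. -/
abbrev State (d N : ℕ) := Fin d × Simplex d N

/-- `shift μ y z = μ + e_{y,z} = μ + (e_y - e_z)/N` in the count representation;
it defaults to `μ` when the shifted measure leaves the simplex (such terms are
multiplied by a vanishing coefficient in the generators below). -/
def shift {d N : ℕ} (μ : Simplex d N) (y z : Fin d) : Simplex d N :=
  if h : ∃ σ : Simplex d N, ∀ w,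
      (σ.1 w : ℕ) + (if w = z then 1 else 0) = (μ.1 w : ℕ) + (if w = y then 1 else 0)
  then h.choose else μ

/-- Rate vectors `a ∈ ℝ^{d-1}`. -/
abbrev Vec (d : ℕ) := Fin (d - 1) → ℝ

def sqnorm {k : ℕ} (a : Fin k → ℝ) : ℝ := ∑ i, a i ^ 2

def norm2 {k : ℕ} (a : Fin k → ℝ) : ℝ := Real.sqrt (sqnorm a)

/-- Feedback controls. -/
abbrev Ctrl (d N : ℕ) := ℝ → State d N → Vec d

/-- Admissible controls `𝒜`: nonnegative and Lipschitz (in time) on `[0,T]`. -/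
def Admissible {d N : ℕ} (T : ℝ) (α : Ctrl d N) : Prop :=
  (∀ t ∈ Set.Icc (0:ℝ) T, ∀ s i, 0 ≤ α t s i) ∧
  ∃ K : NNReal, ∀ s i, LipschitzOnWith K (fun t => α t s i) (Set.Icc (0:ℝ) T)

variable {d N : ℕ}

/-- First difference vector `Δ_x φ = (φ(y) - φ(x))_{y ≠ x}`. -/
def delta (x : Fin d) (φ : Fin d → ℝ) : Vec d :=
  fun i => φ (idxToState x i) - φ x

/-- `γ`-strong convexity of the running cost in the control variable. -/
def StronglyConvex (ℓ : State d N → Vec d → ℝ) (γ : ℝ) : Prop :=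
  ∀ s : State d N, ∀ a a' : Vec d, (∀ i, 0 ≤ a i) → (∀ i, 0 ≤ a' i) →
    ∀ τ ∈ Set.Icc (0:ℝ) 1,
      γ * τ * (1 - τ) * sqnorm (fun i => a' i - a i) ≤
        τ * ℓ s a' + (1 - τ) * ℓ s a - ℓ s (fun i => τ * a' i + (1 - τ) * a i)

/-- The Hamiltonian `H(x,μ,p)`. -/
def ham (lam0 lam1 : State d N → Vec d) (ℓ : State d N → Vec d → ℝ)
    (s : State d N) (p : Vec d) : ℝ :=
  sInf ((fun a => ℓ s a + ∑ i, (lam0 s i + lam1 s i * a i) * p i) ''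
    {a : Vec d | ∀ i, 0 ≤ a i})

/-- `a` is the minimizer defining `â(x,μ,p)`. -/
def IsArgmin (lam1 : State d N → Vec d) (ℓ : State d N → Vec d → ℝ)
    (s : State d N) (p : Vec d) (a : Vec d) : Prop :=
  (∀ i, 0 ≤ a i) ∧ ∀ b : Vec d, (∀ i, 0 ≤ b i) →
    ℓ s a + ∑ i, lam1 s i * a i * p i ≤ ℓ s b + ∑ i, lam1 s i * b i * p i

/-- The minimizer `â(x,μ,p)` (via choice; well defined under strong convexity). -/
def hatAlpha (lam1 : State d N → Vec d) (ℓ : State d N → Vec d → ℝ)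
    (s : State d N) (p : Vec d) : Vec d :=
  if h : ∃ a, IsArgmin lam1 ℓ s p a then h.choose else 0

/-- Mean-field part `𝓛^β_μ` of the generator. -/
def genMu (lam0 lam1 : State d N → Vec d) (β : Ctrl d N)
    (ψ : ℝ → State d N → ℝ) (t : ℝ) (s : State d N) : ℝ :=
  ∑ z : Fin d, ∑ i : Fin (d - 1),
    ((s.2.1 z : ℕ) : ℝ) *
      ((lam0 (z, shift s.2 s.1 z) i + lam1 (z, shift s.2 s.1 z) i * β t (z, shift s.2 s.1 z) i) *
        (ψ t (s.1, shift s.2 (idxToState z i) z) - ψ t s))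

/-- Tagged-player part `𝓛^γ_x` of the generator. -/
def genX (lam0 lam1 : State d N → Vec d) (γc : Ctrl d N)
    (ψ : ℝ → State d N → ℝ) (t : ℝ) (s : State d N) : ℝ :=
  ∑ i, (lam0 s i + lam1 s i * γc t s i) * (ψ t (idxToState s.1 i, s.2) - ψ t s)

/-- `v` is a C¹ solution of the dynamic programming equation `HJB(β)`. -/
def IsHJBSol (T : ℝ) (lam0 lam1 : State d N → Vec d) (ℓ : State d N → Vec d → ℝ)
    (g : State d N → ℝ) (β : Ctrl d N) (v : ℝ → State d N → ℝ) : Prop :=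
  (∀ s, v T s = g s) ∧
  ∀ t ∈ Set.Icc (0:ℝ) T, ∀ s,
    HasDerivWithinAt (fun u => v u s)
      (-(ham lam0 lam1 ℓ s (delta s.1 fun y => v t (y, s.2)) + genMu lam0 lam1 β v t s))
      (Set.Icc (0:ℝ) T) t

/-- `α` is the best response associated with the value function `v`, i.e.
`α(t,x,μ) = â(x,μ,Δ_x v(t,·,μ))` on `[0,T] × 𝒮`. -/
def IsBR (T : ℝ) (lam1 : State d N → Vec d) (ℓ : State d N → Vec d → ℝ)
    (v : ℝ → State d N → ℝ) (α : Ctrl d N) : Prop :=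
  ∀ t ∈ Set.Icc (0:ℝ) T, ∀ s, IsArgmin lam1 ℓ s (delta s.1 fun y => v t (y, s.2)) (α t s)

/-- `v` is a C¹ solution of the `N`-NLL system. -/
def IsNLLSol (T : ℝ) (lam0 lam1 : State d N → Vec d) (ℓ : State d N → Vec d → ℝ)
    (g : State d N → ℝ) (v : ℝ → State d N → ℝ) : Prop :=
  (∀ s, v T s = g s) ∧
  ∃ α : Ctrl d N, IsBR T lam1 ℓ v α ∧
    ∀ t ∈ Set.Icc (0:ℝ) T, ∀ s,
      HasDerivWithinAt (fun u => v u s)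
        (-(ham lam0 lam1 ℓ s (delta s.1 fun y => v t (y, s.2)) + genMu lam0 lam1 α v t s))
        (Set.Icc (0:ℝ) T) t

/-- Markov perfect equilibrium: `α ∈ 𝒜` with `α*(α) = α`. -/
def IsMPE (T : ℝ) (lam0 lam1 : State d N → Vec d) (ℓ : State d N → Vec d → ℝ)
    (g : State d N → ℝ) (α : Ctrl d N) : Prop :=
  Admissible T α ∧
  ∃ v : ℝ → State d N → ℝ, IsHJBSol T lam0 lam1 ℓ g α v ∧ IsBR T lam1 ℓ v α

/-- `‖λ¹‖_∞`. -/
def lamInf (lam1 : State d N → Vec d) : ℝ :=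
  sSup (Set.range fun p : State d N × Fin (d - 1) => lam1 p.1 p.2)

/-- `c_v = max_{(x,μ)} (T ℓ(x,μ,0) + g(x,μ))`. -/
def cV (T : ℝ) (ℓ : State d N → Vec d → ℝ) (g : State d N → ℝ) : ℝ :=
  sSup (Set.range fun s : State d N => T * ℓ s 0 + g s)

/-- `c_a = max_{(x,μ)} |â(x,μ,0)|₂ + 2 √(d-1) ‖λ¹‖_∞ c_v / γ`. -/
def cA (T : ℝ) (lam1 : State d N → Vec d) (ℓ : State d N → Vec d → ℝ)
    (g : State d N → ℝ) (γ : ℝ) : ℝ :=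
  sSup (Set.range fun s : State d N => norm2 (hatAlpha lam1 ℓ s 0)) +
    2 * Real.sqrt ((d : ℝ) - 1) * lamInf lam1 * cV T ℓ g / γ

/-- `|α(t)|₂²` for a (vector-valued) control. -/
def ctrlNormSq (α : Ctrl d N) (t : ℝ) : ℝ := ∑ s : State d N, ∑ i, α t s i ^ 2

/-- `|ψ(t)|₂²` for a (real-valued) function on `[0,T] × 𝒮`. -/
def valNormSq (v : ℝ → State d N → ℝ) (t : ℝ) : ℝ := ∑ s : State d N, v t s ^ 2

/-- `‖α‖ = max_{t ∈ [0,T]} |α(t)|₂`. -/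
def ctrlSup (T : ℝ) (α : Ctrl d N) : ℝ :=
  sSup ((fun t => Real.sqrt (ctrlNormSq α t)) '' Set.Icc (0:ℝ) T)

/-- `‖v‖ = max_{t ∈ [0,T]} |v(t)|₂`. -/
def valSup (T : ℝ) (v : ℝ → State d N → ℝ) : ℝ :=
  sSup ((fun t => Real.sqrt (valNormSq v t)) '' Set.Icc (0:ℝ) T)

/-- The restricted class `𝒜*` of admissible controls bounded by `c_a`. -/
def AdmStar (T : ℝ) (lam1 : State d N → Vec d) (ℓ : State d N → Vec d → ℝ)
    (g : State d N → ℝ) (γ : ℝ) (α : Ctrl d N) : Prop :=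
  Admissible T α ∧ ∀ t ∈ Set.Icc (0:ℝ) T, Real.sqrt (ctrlNormSq α t) ≤ cA T lam1 ℓ g γ

/-- `j = J^{γ;β}` : the cost of the tagged player using `γc` against `β`. -/
def IsCostSol (T : ℝ) (lam0 lam1 : State d N → Vec d) (ℓ : State d N → Vec d → ℝ)
    (g : State d N → ℝ) (γc β : Ctrl d N) (j : ℝ → State d N → ℝ) : Prop :=
  (∀ s, j T s = g s) ∧
  ∀ t ∈ Set.Icc (0:ℝ) T, ∀ s,
    HasDerivWithinAt (fun u => j u s)
      (-(ℓ s (γc t s) + genX lam0 lam1 γc j t s + genMu lam0 lam1 β j t s))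
      (Set.Icc (0:ℝ) T) t

/-- `γs` is an `ε`-Markov perfect equilibrium. -/
def IsEpsMPE (T : ℝ) (lam0 lam1 : State d N → Vec d) (ℓ : State d N → Vec d → ℝ)
    (g : State d N → ℝ) (eps : ℝ) (γs : Ctrl d N) : Prop :=
  Admissible T γs ∧
  ∀ js, IsCostSol T lam0 lam1 ℓ g γs γs js →
    ∀ γc, Admissible T γc → ∀ j, IsCostSol T lam0 lam1 ℓ g γc γs j →
      ∀ t ∈ Set.Icc (0:ℝ) T, ∀ s, js t s ≤ j t s + eps

section AuxLemmas

open Set Filter Topology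

lemma le_of_forall_eps (a b : ℝ) (h : ∀ ε > (0:ℝ), a ≤ b + ε) : a ≤ b := by
  by_contra hc
  push_neg at hc
  have := h ((a - b)/2) (by linarith)
  linarith

lemma sqnorm_nonneg {k : ℕ} (a : Fin k → ℝ) : 0 ≤ sqnorm a :=
  Finset.sum_nonneg fun _ _ => sq_nonneg _

lemma norm2_nonneg {k : ℕ} (a : Fin k → ℝ) : 0 ≤ norm2 a := Real.sqrt_nonneg _

lemma norm2_sq {k : ℕ} (a : Fin k → ℝ) : norm2 a ^ 2 = sqnorm a :=
  Real.sq_sqrt (sqnorm_nonneg a)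

lemma sum_mul_le_norm2 {k : ℕ} (x y : Fin k → ℝ) :
    ∑ i, x i * y i ≤ norm2 x * norm2 y := by
  have h := Finset.sum_mul_sq_le_sq_mul_sq Finset.univ x y
  have h2 : |∑ i, x i * y i| ≤ norm2 x * norm2 y := by
    rw [← Real.sqrt_sq_eq_abs, norm2, norm2, ← Real.sqrt_mul (sqnorm_nonneg x)]
    exact Real.sqrt_le_sqrt h
  exact (le_abs_self _).trans h2

lemma norm2_add_le {k : ℕ} (x y : Fin k → ℝ) :
    norm2 (fun i => x i + y i) ≤ norm2 x + norm2 y := by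
  have hxy := sum_mul_le_norm2 x y
  have hsum : sqnorm (fun i => x i + y i)
      = sqnorm x + 2 * (∑ i, x i * y i) + sqnorm y := by
    unfold sqnorm
    rw [Finset.mul_sum, ← Finset.sum_add_distrib, ← Finset.sum_add_distrib]
    exact Finset.sum_congr rfl fun i _ => by ring
  have h1 : sqnorm (fun i => x i + y i) ≤ (norm2 x + norm2 y) ^ 2 := by
    rw [hsum]
    have hx := norm2_sq x
    have hy := norm2_sq y
    nlinarith [norm2_nonneg x, norm2_nonneg y]
  calc norm2 (fun i => x i + y i) = Real.sqrt (sqnorm fun i => x i + y i) := rfl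
    _ ≤ Real.sqrt ((norm2 x + norm2 y) ^ 2) := Real.sqrt_le_sqrt h1
    _ = norm2 x + norm2 y := Real.sqrt_sq (by have := norm2_nonneg x; have := norm2_nonneg y; linarith)

lemma exists_minOn_orthant {k : ℕ} (F : (Fin k → ℝ) → ℝ) (hF : Continuous F)
    (C1 C2 C3 : ℝ) (hC1 : 0 < C1) (hC2 : 0 ≤ C2) (hC3 : 0 ≤ C3)
    (hlb : ∀ a : Fin k → ℝ, (∀ i, 0 ≤ a i) → C1 * sqnorm a - C2 * norm2 a - C3 ≤ F a) :
    ∃ a : Fin k → ℝ, (∀ i, 0 ≤ a i) ∧ ∀ b : Fin k → ℝ, (∀ i, 0 ≤ b i) → F a ≤ F b := by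
  set R : ℝ := max 1 ((C2 + C3 + |F 0| + 1) / C1) with hR
  have hR1 : (1:ℝ) ≤ R := le_max_left _ _
  have hRq : C2 + C3 + |F 0| + 1 ≤ C1 * R := by
    have h := le_max_right 1 ((C2 + C3 + |F 0| + 1) / C1)
    calc C2 + C3 + |F 0| + 1 = ((C2 + C3 + |F 0| + 1) / C1) * C1 := by field_simp
      _ ≤ R * C1 := mul_le_mul_of_nonneg_right h hC1.le
      _ = C1 * R := mul_comm _ _
  set K : Set (Fin k → ℝ) := {a | (∀ i, 0 ≤ a i) ∧ norm2 a ≤ R} with hK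
  have hnorm2cont : Continuous fun a : Fin k → ℝ => norm2 a :=
    Real.continuous_sqrt.comp (continuous_finset_sum _ fun i _ => (continuous_apply i).pow 2)
  have hKc : IsClosed K := by
    have h1 : IsClosed {a : Fin k → ℝ | ∀ i, 0 ≤ a i} := by
      have he : {a : Fin k → ℝ | ∀ i, 0 ≤ a i} = ⋂ i, {a | 0 ≤ a i} := by
        ext a; simp [Set.mem_iInter]
      rw [he]
      exact isClosed_iInter fun i => isClosed_le continuous_const (continuous_apply i)
    exact h1.inter (isClosed_le hnorm2cont continuous_const)
  have hsub : K ⊆ Set.pi Set.univ fun _ : Fin k => Set.Icc (0:ℝ) R := by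
    rintro a ⟨ha, haR⟩ i -
    refine ⟨ha i, le_trans ?_ haR⟩
    rw [norm2, show a i = Real.sqrt ((a i)^2) from (Real.sqrt_sq (ha i)).symm]
    exact Real.sqrt_le_sqrt
      (Finset.single_le_sum (fun j _ => sq_nonneg (a j)) (Finset.mem_univ i))
  have hKcomp : IsCompact K :=
    IsCompact.of_isClosed_subset (isCompact_univ_pi fun _ => isCompact_Icc) hKc hsub
  have h0K : (0 : Fin k → ℝ) ∈ K := by
    refine ⟨fun i => le_rfl, ?_⟩
    have : norm2 (0 : Fin k → ℝ) = 0 := by simp [norm2, sqnorm]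
    rw [this]; linarith
  obtain ⟨a, haK, hmin⟩ := hKcomp.exists_isMinOn ⟨0, h0K⟩ hF.continuousOn
  refine ⟨a, haK.1, fun b hb => ?_⟩
  by_cases hbR : norm2 b ≤ R
  · exact hmin ⟨hb, hbR⟩
  · push_neg at hbR
    have h0 : F a ≤ F 0 := hmin h0K
    have hlbb := hlb b hb
    have hsq : sqnorm b = norm2 b ^ 2 := (norm2_sq b).symm
    set n := norm2 b with hn
    have hn1 : 1 ≤ n := le_trans hR1 hbR.le
    have key : F 0 < C1 * sqnorm b - C2 * n - C3 := by
      rw [hsq]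
      have hn0 : (0:ℝ) ≤ n := by linarith
      have h1 : C1 * R * n ≤ C1 * n * n := by
        nlinarith [mul_le_mul_of_nonneg_left hbR.le (mul_nonneg hC1.le hn0)]
      have h2 : (C2 + C3 + |F 0| + 1) * n ≤ C1 * R * n := by
        nlinarith [mul_le_mul_of_nonneg_right hRq hn0]
      have h3 : F 0 ≤ |F 0| := le_abs_self _
      nlinarith [mul_nonneg (by positivity : (0:ℝ) ≤ C3 + |F 0| + 1)
        (by linarith : (0:ℝ) ≤ n - 1)]
    linarith

lemma continuousOn_sup' {ι : Type*} (s : Finset ι) (hs : s.Nonempty)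
    (f : ι → ℝ → ℝ) (u : Set ℝ) (hf : ∀ i, ContinuousOn (f i) u) :
    ContinuousOn (fun t => s.sup' hs fun i => f i t) u :=
  ContinuousOn.finset_sup'_apply hs fun i _ => hf i

lemma max_comparison {ι : Type*} [Fintype ι] [Nonempty ι] {b : ℝ} (hb : 0 ≤ b)
    (f f' : ι → ℝ → ℝ)
    (hf : ∀ i, ∀ t ∈ Set.Icc (0:ℝ) b, HasDerivWithinAt (f i) (f' i t) (Set.Icc (0:ℝ) b) t)
    (c0 c1 : ℝ) (h0 : ∀ i, f i 0 ≤ c0)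
    (hlt : ∀ t ∈ Set.Ico (0:ℝ) b, ∀ i, (∀ j, f j t ≤ f i t) → c0 + c1 * t ≤ f i t →
      f' i t < c1) :
    ∀ t ∈ Set.Icc (0:ℝ) b, ∀ i, f i t ≤ c0 + c1 * t := by
  have hne : (Finset.univ : Finset ι).Nonempty := Finset.univ_nonempty
  set M : ℝ → ℝ := fun t => Finset.univ.sup' hne fun i => f i t with hM
  have hattain : ∀ t, ∃ i, f i t = M t := by
    intro t
    obtain ⟨i, -, hi⟩ := Finset.exists_mem_eq_sup' hne fun i => f i t
    exact ⟨i, hi.symm⟩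
  have hSne : ∀ t, (Finset.univ.filter fun i => f i t = M t).Nonempty := by
    intro t
    obtain ⟨i, hi⟩ := hattain t
    exact ⟨i, Finset.mem_filter.mpr ⟨Finset.mem_univ _, hi⟩⟩
  set F' : ℝ → ℝ := fun t =>
    (Finset.univ.filter fun i => f i t = M t).sup' (hSne t) fun i => f' i t with hF'
  have hfc : ∀ i, ContinuousOn (f i) (Set.Icc (0:ℝ) b) := fun i t ht =>
    (hf i t ht).continuousWithinAt
  have hMc : ContinuousOn M (Set.Icc (0:ℝ) b) := continuousOn_sup' _ hne _ _ hfc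
  have hle : ∀ t i, f i t ≤ M t := fun t i => by
    rw [hM]
    exact Finset.le_sup' (fun j => f j t) (Finset.mem_univ i)
  have key : ∀ t ∈ Set.Icc (0:ℝ) b, M t ≤ c0 + c1 * t := by
    intro t ht
    refine image_le_of_liminf_slope_right_lt_deriv_boundary (f := M) (f' := F')
      (B := fun t => c0 + c1 * t) (B' := fun _ => c1) hMc ?_ ?_ ?_ ?_ ht
    · -- slope condition
      intro x hx r hr
      have hxI : x ∈ Set.Icc (0:ℝ) b := ⟨hx.1, hx.2.le⟩
      have hnhds : 𝓝[Set.Ioc x b] x = 𝓝[>] x := nhdsWithin_Ioc_eq_nhdsGT hx.2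
      have hev : ∀ i : ι, ∀ᶠ z in 𝓝[>] x, f i z < M x + (z - x) * r := by
        intro i
        by_cases hiA : f i x = M x
        · have hder := hf i x hxI
          have hslope := hasDerivWithinAt_iff_tendsto_slope.mp hder
          have hsubset : Set.Ioc x b ⊆ Set.Icc (0:ℝ) b \ {x} := fun z hz =>
            ⟨⟨le_trans hx.1 hz.1.le, hz.2⟩, ne_of_gt hz.1⟩
          have h1 : Tendsto (slope (f i) x) (𝓝[Set.Ioc x b] x) (𝓝 (f' i x)) :=
            hslope.mono_left (nhdsWithin_mono _ hsubset)
          rw [hnhds] at h1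
          have hfr : f' i x < r := lt_of_le_of_lt (Finset.le_sup' (fun j => f' j x)
            (Finset.mem_filter.mpr ⟨Finset.mem_univ _, hiA⟩)) hr
          filter_upwards [h1.eventually_lt_const hfr, self_mem_nhdsWithin] with z hz hzx
          have hzx' : (0:ℝ) < z - x := sub_pos.mpr hzx
          rw [slope_def_field, div_lt_iff₀ hzx'] at hz
          rw [← hiA]
          nlinarith [hz]
        · have hlt2 : f i x < M x := lt_of_le_of_ne (hle x i) hiA
          have hcont : Tendsto (f i) (𝓝[Set.Icc (0:ℝ) b] x) (𝓝 (f i x)) := hfc i x hxI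
          have hg : Tendsto (fun z => M x + (z - x) * r) (𝓝[Set.Icc (0:ℝ) b] x)
              (𝓝 (M x)) := by
            have hc : Continuous (fun z : ℝ => M x + (z - x) * r) := by continuity
            have := (hc.tendsto x).mono_left (nhdsWithin_le_nhds
              (s := Set.Icc (0:ℝ) b))
            simpa using this
          have hev2 := hcont.eventually_lt hg hlt2
          have hmono : 𝓝[Set.Ioc x b] x ≤ 𝓝[Set.Icc (0:ℝ) b] x :=
            nhdsWithin_mono _ (fun z hz => ⟨le_trans hx.1 hz.1.le, hz.2⟩)
          rw [← hnhds]
          exact hev2.filter_mono hmono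
      have hall : ∀ᶠ z in 𝓝[>] x, ∀ i, f i z < M x + (z - x) * r := eventually_all.mpr hev
      have hfinal : ∀ᶠ z in 𝓝[>] x, slope M x z < r := by
        filter_upwards [hall, self_mem_nhdsWithin] with z hz hzx
        have hzx' : (0:ℝ) < z - x := sub_pos.mpr hzx
        have hMz : M z < M x + (z - x) * r := by
          obtain ⟨i, hi⟩ := hattain z
          rw [← hi]
          exact hz i
        rw [slope_def_field, div_lt_iff₀ hzx']
        nlinarith [hMz]
      exact hfinal.frequently
    · -- initial condition
      simp only [mul_zero, add_zero]
      exact Finset.sup'_le _ _ fun i _ => h0 i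
    · -- B derivative
      intro x
      simpa using ((hasDerivAt_id x).const_mul c1).const_add c0
    · -- strict bound at contact points
      intro x hx hMB
      rw [hF']
      rw [Finset.sup'_lt_iff]
      intro i hi
      rw [Finset.mem_filter] at hi
      exact hlt x hx i (fun j => hi.2 ▸ hle x j) ((hi.2.trans hMB).ge)
  intro t ht i
  exact (hle t i).trans (key t ht)

end AuxLemmas

section SpecificLemmas

open Set Filter

variable {d N : ℕ}

lemma simplex_nonempty (d N : ℕ) (hd : 1 ≤ d) : Nonempty (Simplex d N) := by
  refine ⟨⟨fun x => if x = ⟨0, by omega⟩ then ⟨N, Nat.lt_succ_self N⟩ else ⟨0, Nat.succ_pos N⟩, ?_⟩⟩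
  rw [Finset.sum_eq_single (⟨0, by omega⟩ : Fin d)]
  · simp
  · intro x _ hx; simp [hx]
  · intro h; exact absurd (Finset.mem_univ _) h

lemma coercive_lb (lam0 lam1 : State d N → Vec d) (ℓ : State d N → Vec d → ℝ)
    (γ : ℝ) (hγ : 0 < γ) (hℓconv : StronglyConvex ℓ γ)
    (hℓnn : ∀ s a, (∀ i, 0 ≤ a i) → 0 ≤ ℓ s a)
    (s : State d N) (p : Vec d) (a : Vec d) (ha : ∀ i, 0 ≤ a i) :
    γ/2 * sqnorm a - norm2 (fun i => lam1 s i * p i) * norm2 a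
      - (ℓ s 0 + |∑ i, lam0 s i * p i|)
      ≤ ℓ s a + ∑ i, (lam0 s i + lam1 s i * a i) * p i := by
  have hSC := hℓconv s 0 a (fun i => le_rfl) ha (1/2) ⟨by norm_num, by norm_num⟩
  have h0 : sqnorm (fun i => a i - (0 : Vec d) i) = sqnorm a := by
    simp [sqnorm]
  rw [h0] at hSC
  have hmid := hℓnn s (fun i => (1/2 : ℝ) * a i + (1 - 1/2) * (0 : Vec d) i)
    (fun i => by have := ha i; simp only [Pi.zero_apply, mul_zero, add_zero]; linarith)
  have hla : γ/2 * sqnorm a - ℓ s 0 ≤ ℓ s a := by nlinarith [hSC, hmid]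
  have hsplit : ∑ i, (lam0 s i + lam1 s i * a i) * p i
      = (∑ i, lam0 s i * p i) + ∑ i, (lam1 s i * p i) * a i := by
    rw [← Finset.sum_add_distrib]
    exact Finset.sum_congr rfl fun i _ => by ring
  have hcs : ∑ i, (-(lam1 s i * p i)) * a i ≤ norm2 (fun i => -(lam1 s i * p i)) * norm2 a :=
    sum_mul_le_norm2 _ _
  have hneg : norm2 (fun i => -(lam1 s i * p i)) = norm2 (fun i => lam1 s i * p i) := by
    simp [norm2, sqnorm]
  have hsumneg : ∑ i, (-(lam1 s i * p i)) * a i = -∑ i, (lam1 s i * p i) * a i := by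
    rw [← Finset.sum_neg_distrib]
    exact Finset.sum_congr rfl fun i _ => by ring
  rw [hneg, hsumneg] at hcs
  have habs : -|∑ i, lam0 s i * p i| ≤ ∑ i, lam0 s i * p i := neg_abs_le _
  rw [hsplit]
  linarith

lemma hamSet_bddBelow (lam0 lam1 : State d N → Vec d) (ℓ : State d N → Vec d → ℝ)
    (γ : ℝ) (hγ : 0 < γ) (hℓconv : StronglyConvex ℓ γ)
    (hℓnn : ∀ s a, (∀ i, 0 ≤ a i) → 0 ≤ ℓ s a)
    (s : State d N) (p : Vec d) :
    BddBelow ((fun a => ℓ s a + ∑ i, (lam0 s i + lam1 s i * a i) * p i) ''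
      {a : Vec d | ∀ i, 0 ≤ a i}) := by
  set C2 := norm2 (fun i => lam1 s i * p i) with hC2
  set C3 := ℓ s 0 + |∑ i, lam0 s i * p i| with hC3
  refine ⟨(-(C2^2)) / (2*γ) - C3, ?_⟩
  rintro x ⟨a, ha, rfl⟩
  have h1 := coercive_lb lam0 lam1 ℓ γ hγ hℓconv hℓnn s p a ha
  have h2 : sqnorm a = norm2 a ^ 2 := (norm2_sq a).symm
  rw [h2] at h1
  have h2γ : (0:ℝ) < 2*γ := by linarith
  have main : (-(C2^2)) ≤ (γ/2 * norm2 a ^ 2 - C2 * norm2 a) * (2*γ) := by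
    nlinarith [sq_nonneg (γ * norm2 a - C2)]
  have h3 : (-(C2^2)) / (2*γ) ≤ γ/2 * norm2 a ^ 2 - C2 * norm2 a :=
    (div_le_iff₀ h2γ).mpr main
  linarith

end SpecificLemmas

set_option maxHeartbeats 1000000

theorem stmt7_restricted_hamiltonian
    {d N : ℕ} (hd : 2 ≤ d) (hN : 1 ≤ N) (T : ℝ) (hT : 0 < T)
    (lam0 lam1 : State d N → Vec d)
    (hlam0 : ∀ s i, 0 ≤ lam0 s i) (hlam1 : ∀ s i, 0 ≤ lam1 s i)
    (ℓ : State d N → Vec d → ℝ) (γ : ℝ) (hγ : 0 < γ)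
    (hℓc : ∀ s, Continuous (ℓ s))
    (hℓnn : ∀ s a, (∀ i, 0 ≤ a i) → 0 ≤ ℓ s a)
    (hℓconv : StronglyConvex ℓ γ)
    (g : State d N → ℝ) (hg : ∀ s, 0 ≤ g s)
 :
    ∀ β : Ctrl d N, Admissible T β → ∀ v : ℝ → State d N → ℝ,
      IsHJBSol T lam0 lam1 ℓ g β v → ∀ t ∈ Set.Icc (0:ℝ) T, ∀ s : State d N,
        ham lam0 lam1 ℓ s (delta s.1 fun y => v t (y, s.2)) =
          sInf ((fun a => ℓ s a +
              ∑ i, (lam0 s i + lam1 s i * a i) * (delta s.1 fun y => v t (y, s.2)) i) ''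
            {a : Vec d | (∀ i, 0 ≤ a i) ∧ norm2 a ≤ cA T lam1 ℓ g γ}) := by
  intro β hβ v hv t ht s
  haveI : Nonempty (Simplex d N) := simplex_nonempty d N (by omega)
  haveI : Nonempty (State d N) := ⟨(⟨0, by omega⟩, Classical.arbitrary _)⟩
  obtain ⟨hβnn, -⟩ := hβ
  obtain ⟨hvT, hvD⟩ := hv
  have hcV_ge : ∀ s' : State d N, T * ℓ s' 0 + g s' ≤ cV T ℓ g := fun s' =>
    le_csSup (Set.finite_range _).bddAbove ⟨s', rfl⟩
  have hcV_nn : 0 ≤ cV T ℓ g :=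
    le_trans (add_nonneg (mul_nonneg hT.le (hℓnn _ _ fun _ => le_rfl))
      (hg (Classical.arbitrary _))) (hcV_ge (Classical.arbitrary _))
  obtain ⟨sg, -, hsg⟩ := Finset.exists_max_image Finset.univ g
    ⟨Classical.arbitrary _, Finset.mem_univ _⟩
  obtain ⟨sl, -, hsl⟩ := Finset.exists_max_image Finset.univ (fun s' : State d N => ℓ s' 0)
    ⟨Classical.arbitrary _, Finset.mem_univ _⟩
  have hsg' : ∀ s' : State d N, g s' ≤ g sg := fun s' => hsg s' (Finset.mem_univ _)
  have hsl' : ∀ s' : State d N, ℓ s' 0 ≤ ℓ sl 0 := fun s' => hsl s' (Finset.mem_univ _)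
  have hVB2cV : g sg + T * ℓ sl 0 ≤ 2 * cV T ℓ g := by
    have h1 := hcV_ge sg
    have h2 := hcV_ge sl
    have h3 : (0:ℝ) ≤ T * ℓ sg 0 := mul_nonneg hT.le (hℓnn _ _ fun _ => le_rfl)
    have h4 := hg sl
    linarith
  -- time-reversed derivative
  have hrev : ∀ (s' : State d N), ∀ u ∈ Set.Icc (0:ℝ) T,
      HasDerivWithinAt (fun u' => v (T - u') s')
        (ham lam0 lam1 ℓ s' (delta s'.1 fun y => v (T - u) (y, s'.2)) +
          genMu lam0 lam1 β v (T - u) s') (Set.Icc (0:ℝ) T) u := by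
    intro s' u hu
    have hTu : T - u ∈ Set.Icc (0:ℝ) T := ⟨by linarith [hu.2], by linarith [hu.1]⟩
    have h1 := hvD (T - u) hTu s'
    have h2 : HasDerivWithinAt (fun u' : ℝ => T - u') (-1) (Set.Icc (0:ℝ) T) u :=
      ((hasDerivAt_id u).const_sub T).hasDerivWithinAt
    have h3 := HasDerivWithinAt.comp u h1 h2
      (fun x hx => ⟨by linarith [hx.2], by linarith [hx.1]⟩)
    have h4 : HasDerivWithinAt (fun u' => v (T - u') s')
        (-(ham lam0 lam1 ℓ s' (delta s'.1 fun y => v (T - u) (y, s'.2)) +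
          genMu lam0 lam1 β v (T - u) s') * (-1)) (Set.Icc (0:ℝ) T) u := h3
    simpa using h4
  -- upper bound on v
  have hub_eps : ∀ ε > (0:ℝ), ∀ u ∈ Set.Icc (0:ℝ) T, ∀ s' : State d N,
      v (T - u) s' ≤ (g sg + ε) + (ℓ sl 0 + ε) * u := by
    intro ε hε
    refine max_comparison hT.le (fun i u => v (T - u) i)
      (fun i u => ham lam0 lam1 ℓ i (delta i.1 fun y => v (T - u) (y, i.2)) +
        genMu lam0 lam1 β v (T - u) i)
      (fun i u hu => hrev i u hu) (g sg + ε) (ℓ sl 0 + ε) ?_ ?_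
    · intro i
      simp only [sub_zero, hvT]
      linarith [hsg' i]
    · intro u hu i hmaxi _
      show ham lam0 lam1 ℓ i (delta i.1 fun y => v (T - u) (y, i.2)) +
        genMu lam0 lam1 β v (T - u) i < ℓ sl 0 + ε
      have ht'I : T - u ∈ Set.Icc (0:ℝ) T := ⟨by linarith [hu.2], by linarith [hu.1]⟩
      have hgen : genMu lam0 lam1 β v (T - u) i ≤ 0 := by
        apply Finset.sum_nonpos
        intro z _
        apply Finset.sum_nonpos
        intro k _
        apply mul_nonpos_of_nonneg_of_nonpos (Nat.cast_nonneg _)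
        apply mul_nonpos_of_nonneg_of_nonpos
        · exact add_nonneg (hlam0 _ _) (mul_nonneg (hlam1 _ _) (hβnn _ ht'I _ _))
        · have h1 := hmaxi (i.1, shift i.2 (idxToState z k) z)
          simpa using h1
      have hp_nonpos : ∀ k, (delta i.1 fun y => v (T - u) (y, i.2)) k ≤ 0 := by
        intro k
        have h1 := hmaxi (idxToState i.1 k, i.2)
        simp only [delta]
        simpa using h1
      have hham_le : ham lam0 lam1 ℓ i (delta i.1 fun y => v (T - u) (y, i.2))
          ≤ ℓ i 0 + ∑ k, lam0 i k * (delta i.1 fun y => v (T - u) (y, i.2)) k := by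
        have hbdd := hamSet_bddBelow lam0 lam1 ℓ γ hγ hℓconv hℓnn i
          (delta i.1 fun y => v (T - u) (y, i.2))
        have hmem := Set.mem_image_of_mem
          (fun a => ℓ i a + ∑ k, (lam0 i k + lam1 i k * a k) *
            (delta i.1 fun y => v (T - u) (y, i.2)) k)
          (show (0 : Vec d) ∈ {a : Vec d | ∀ j, 0 ≤ a j} from fun _ => le_rfl)
        have h := csInf_le hbdd hmem
        rw [ham]
        simpa using h
      have hS0 : ∑ k, lam0 i k * (delta i.1 fun y => v (T - u) (y, i.2)) k ≤ 0 :=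
        Finset.sum_nonpos fun k _ =>
          mul_nonpos_of_nonneg_of_nonpos (hlam0 i k) (hp_nonpos k)
      have := hsl' i
      linarith
  have hvub : ∀ t' ∈ Set.Icc (0:ℝ) T, ∀ s' : State d N, v t' s' ≤ g sg + T * ℓ sl 0 := by
    intro t' ht' s'
    refine le_of_forall_eps _ _ fun ε hε => ?_
    have h1T : (0:ℝ) < 1 + T := by linarith
    have hδ : (0:ℝ) < ε / (1 + T) := div_pos hε h1T
    have hu : T - t' ∈ Set.Icc (0:ℝ) T := ⟨by linarith [ht'.2], by linarith [ht'.1]⟩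
    have hkey := hub_eps (ε / (1 + T)) hδ (T - t') hu s'
    rw [show T - (T - t') = t' from by ring] at hkey
    have h2 : ℓ sl 0 * (T - t') ≤ ℓ sl 0 * T :=
      mul_le_mul_of_nonneg_left (by linarith [ht'.1]) (hℓnn sl 0 fun _ => le_rfl)
    have h3 : ε / (1 + T) * (T - t') ≤ ε / (1 + T) * T :=
      mul_le_mul_of_nonneg_left (by linarith [ht'.1]) hδ.le
    have h4 : ε / (1 + T) + ε / (1 + T) * T = ε := by field_simp
    nlinarith [hkey]
  -- lower bound on v
  have hlb_eps : ∀ ε > (0:ℝ), ∀ u ∈ Set.Icc (0:ℝ) T, ∀ s' : State d N,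
      -(v (T - u) s') ≤ ε + ε * u := by
    intro ε hε
    refine max_comparison hT.le (fun i u => -(v (T - u) i))
      (fun i u => -(ham lam0 lam1 ℓ i (delta i.1 fun y => v (T - u) (y, i.2)) +
        genMu lam0 lam1 β v (T - u) i))
      (fun i u hu => (hrev i u hu).neg) ε ε ?_ ?_
    · intro i
      simp only [sub_zero, hvT]
      linarith [hg i]
    · intro u hu i hmaxi _
      show -(ham lam0 lam1 ℓ i (delta i.1 fun y => v (T - u) (y, i.2)) +
        genMu lam0 lam1 β v (T - u) i) < ε
      have ht'I : T - u ∈ Set.Icc (0:ℝ) T := ⟨by linarith [hu.2], by linarith [hu.1]⟩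
      have hp_nonneg : ∀ k, 0 ≤ (delta i.1 fun y => v (T - u) (y, i.2)) k := by
        intro k
        have h1 := hmaxi (idxToState i.1 k, i.2)
        simp only [delta]
        simp only [neg_le_neg_iff] at h1
        simpa using h1
      have hgen : 0 ≤ genMu lam0 lam1 β v (T - u) i := by
        apply Finset.sum_nonneg
        intro z _
        apply Finset.sum_nonneg
        intro k _
        apply mul_nonneg (Nat.cast_nonneg _)
        apply mul_nonneg
        · exact add_nonneg (hlam0 _ _) (mul_nonneg (hlam1 _ _) (hβnn _ ht'I _ _))
        · have h1 := hmaxi (i.1, shift i.2 (idxToState z k) z)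
          simp only [neg_le_neg_iff] at h1
          simpa using h1
      have hham_nn : 0 ≤ ham lam0 lam1 ℓ i (delta i.1 fun y => v (T - u) (y, i.2)) := by
        rw [ham]
        apply le_csInf
        · exact ⟨_, Set.mem_image_of_mem _ (show (0:Vec d) ∈ {a : Vec d | ∀ j, 0 ≤ a j}
            from fun _ => le_rfl)⟩
        · rintro b ⟨a, ha, rfl⟩
          exact add_nonneg (hℓnn i a ha) (Finset.sum_nonneg fun k _ =>
            mul_nonneg (add_nonneg (hlam0 _ _) (mul_nonneg (hlam1 _ _) (ha k)))
              (hp_nonneg k))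
      linarith
  have hvlb : ∀ t' ∈ Set.Icc (0:ℝ) T, ∀ s' : State d N, 0 ≤ v t' s' := by
    intro t' ht' s'
    have key : ∀ ε > (0:ℝ), -(v t' s') ≤ 0 + ε := by
      intro ε hε
      have h1T : (0:ℝ) < 1 + T := by linarith
      have hδ : (0:ℝ) < ε / (1 + T) := div_pos hε h1T
      have hu : T - t' ∈ Set.Icc (0:ℝ) T := ⟨by linarith [ht'.2], by linarith [ht'.1]⟩
      have hkey := hlb_eps (ε / (1 + T)) hδ (T - t') hu s'
      rw [show T - (T - t') = t' from by ring] at hkey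
      have h3 : ε / (1 + T) * (T - t') ≤ ε / (1 + T) * T :=
        mul_le_mul_of_nonneg_left (by linarith [ht'.1]) hδ.le
      have h4 : ε / (1 + T) + ε / (1 + T) * T = ε := by field_simp
      nlinarith [hkey]
    have := le_of_forall_eps _ _ key
    linarith
  -- p and its bounds
  set p : Vec d := delta s.1 fun y => v t (y, s.2) with hpdef
  have hpbd : ∀ k, |p k| ≤ 2 * cV T ℓ g := by
    intro k
    have h1 := hvub t ht (idxToState s.1 k, s.2)
    have h2 := hvub t ht (s.1, s.2)
    have h3 := hvlb t ht (idxToState s.1 k, s.2)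
    have h4 := hvlb t ht (s.1, s.2)
    rw [hpdef]
    simp only [delta]
    rw [abs_le]
    constructor <;> linarith
  -- minimizer of ℓ over the orthant, i.e. hatAlpha at p = 0
  have hargmin0 : ∃ a, IsArgmin lam1 ℓ s 0 a := by
    have hlb0 : ∀ a : Vec d, (∀ i, 0 ≤ a i) →
        γ/2 * sqnorm a - 0 * norm2 a - ℓ s 0 ≤ (fun a => ℓ s a) a := by
      intro a ha
      have hcb := coercive_lb lam0 lam1 ℓ γ hγ hℓconv hℓnn s (0 : Vec d) a ha
      have hn0 : norm2 (fun i => lam1 s i * (0:Vec d) i) = 0 := by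
        simp [norm2, sqnorm]
      rw [hn0] at hcb
      simpa using hcb
    obtain ⟨a0, h1, h2⟩ := exists_minOn_orthant (fun a => ℓ s a) (hℓc s) (γ/2) 0 (ℓ s 0)
      (by linarith) le_rfl (hℓnn s 0 fun _ => le_rfl) hlb0
    refine ⟨a0, h1, fun b hb => ?_⟩
    simpa using h2 b hb
  have ha0spec : IsArgmin lam1 ℓ s 0 (hatAlpha lam1 ℓ s 0) := by
    rw [hatAlpha, dif_pos hargmin0]
    exact hargmin0.choose_spec
  set a0 : Vec d := hatAlpha lam1 ℓ s 0 with ha0def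
  have ha0nn : ∀ i, 0 ≤ a0 i := ha0spec.1
  have ha0min : ∀ b : Vec d, (∀ i, 0 ≤ b i) → ℓ s a0 ≤ ℓ s b := by
    intro b hb
    have := ha0spec.2 b hb
    simpa using this
  -- global minimizer of the Hamiltonian objective
  have hFcont : Continuous (fun a : Vec d => ℓ s a + ∑ k, (lam0 s k + lam1 s k * a k) * p k) :=
    (hℓc s).add (continuous_finset_sum _ fun k _ =>
      (continuous_const.add (continuous_const.mul (continuous_apply k))).mul continuous_const)
  obtain ⟨astar, hastar_nn, hastar_min⟩ :=
    exists_minOn_orthant (fun a : Vec d => ℓ s a + ∑ k, (lam0 s k + lam1 s k * a k) * p k)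
      hFcont (γ/2) (norm2 (fun k => lam1 s k * p k)) (ℓ s 0 + |∑ k, lam0 s k * p k|)
      (by linarith) (norm2_nonneg _)
      (add_nonneg (hℓnn s 0 fun _ => le_rfl) (abs_nonneg _))
      (fun a ha => coercive_lb lam0 lam1 ℓ γ hγ hℓconv hℓnn s p a ha)
  -- strong convexity bound on the distance between minimizers
  set Dn : ℝ := norm2 (fun k => astar k - a0 k) with hDn
  have hDn_nn : 0 ≤ Dn := norm2_nonneg _
  have hDsq : sqnorm (fun k => astar k - a0 k) = Dn ^ 2 := (norm2_sq _).symm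
  have hmid_nn : ∀ k, 0 ≤ (1/2 : ℝ) * astar k + (1 - 1/2) * a0 k := fun k => by
    have h1 := hastar_nn k
    have h2 := ha0nn k
    norm_num
    linarith
  have hSC := hℓconv s a0 astar ha0nn hastar_nn (1/2) ⟨by norm_num, by norm_num⟩
  rw [hDsq] at hSC
  have hmid1 := ha0min _ hmid_nn
  have ineq1 : γ/2 * Dn^2 ≤ ℓ s astar - ℓ s a0 := by nlinarith [hSC, hmid1]
  have hlin : ∑ k, (lam0 s k + lam1 s k * ((1/2 : ℝ) * astar k + (1 - 1/2) * a0 k)) * p k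
      = (1/2 : ℝ) * ∑ k, (lam0 s k + lam1 s k * astar k) * p k
        + (1 - 1/2 : ℝ) * ∑ k, (lam0 s k + lam1 s k * a0 k) * p k := by
    rw [Finset.mul_sum, Finset.mul_sum, ← Finset.sum_add_distrib]
    exact Finset.sum_congr rfl fun k _ => by ring
  have hFmid := hastar_min (fun k => (1/2 : ℝ) * astar k + (1 - 1/2) * a0 k) hmid_nn
  rw [hlin] at hFmid
  have ineq2 : γ/2 * Dn^2
      ≤ (ℓ s a0 + ∑ k, (lam0 s k + lam1 s k * a0 k) * p k)
        - (ℓ s astar + ∑ k, (lam0 s k + lam1 s k * astar k) * p k) := by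
    nlinarith [hSC, hFmid]
  have hq : ∑ k, (lam1 s k * p k) * (a0 k - astar k)
      = (∑ k, (lam0 s k + lam1 s k * a0 k) * p k)
        - ∑ k, (lam0 s k + lam1 s k * astar k) * p k := by
    rw [← Finset.sum_sub_distrib]
    exact Finset.sum_congr rfl fun k _ => by ring
  have hsum : γ * Dn^2 ≤ ∑ k, (lam1 s k * p k) * (a0 k - astar k) := by
    rw [hq]
    linarith
  have hcs2 : ∑ k, (lam1 s k * p k) * (a0 k - astar k)
      ≤ norm2 (fun k => lam1 s k * p k) * Dn := by
    have h := sum_mul_le_norm2 (fun k => lam1 s k * p k) (fun k => a0 k - astar k)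
    have hsym : norm2 (fun k => a0 k - astar k) = Dn := by
      rw [hDn]
      unfold norm2 sqnorm
      congr 1
      exact Finset.sum_congr rfl fun k _ => by ring
    rwa [hsym] at h
  have hDnle : Dn ≤ norm2 (fun k => lam1 s k * p k) / γ := by
    rcases eq_or_lt_of_le hDn_nn with h | h
    · rw [← h]
      exact div_nonneg (norm2_nonneg _) hγ.le
    · rw [le_div_iff₀ hγ]
      nlinarith [hsum.trans hcs2]
  -- bound on norm2 q
  haveI : Nonempty (Fin (d - 1)) := ⟨⟨0, by omega⟩⟩
  have hlamInf_ge : ∀ k, lam1 s k ≤ lamInf lam1 := fun k =>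
    le_csSup (Set.finite_range _).bddAbove ⟨(s, k), rfl⟩
  have hlamInf_nn : 0 ≤ lamInf lam1 :=
    le_trans (hlam1 s (Classical.arbitrary _)) (hlamInf_ge _)
  have hqbd : norm2 (fun k => lam1 s k * p k)
      ≤ Real.sqrt ((d : ℝ) - 1) * (lamInf lam1 * (2 * cV T ℓ g)) := by
    have h1 : sqnorm (fun k => lam1 s k * p k)
        ≤ ((d - 1 : ℕ) : ℝ) * (lamInf lam1 * (2 * cV T ℓ g))^2 := by
      have hstep : ∀ k, (lam1 s k * p k)^2 ≤ (lamInf lam1 * (2 * cV T ℓ g))^2 := by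
        intro k
        have h2 := hpbd k
        have h3 := hlamInf_ge k
        have h4 := hlam1 s k
        have habs : |lam1 s k * p k| ≤ lamInf lam1 * (2 * cV T ℓ g) := by
          rw [abs_mul, abs_of_nonneg h4]
          exact mul_le_mul h3 h2 (abs_nonneg _) hlamInf_nn
        have := abs_le.mp habs
        nlinarith [this.1, this.2]
      calc sqnorm (fun k => lam1 s k * p k)
          ≤ ∑ _k : Fin (d-1), (lamInf lam1 * (2 * cV T ℓ g))^2 :=
            Finset.sum_le_sum fun k _ => hstep k
        _ = ((d - 1 : ℕ) : ℝ) * (lamInf lam1 * (2 * cV T ℓ g))^2 := by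
            rw [Finset.sum_const, Finset.card_univ, Fintype.card_fin, nsmul_eq_mul]
    have hM_nn : 0 ≤ lamInf lam1 * (2 * cV T ℓ g) := by positivity
    calc norm2 (fun k => lam1 s k * p k)
        = Real.sqrt (sqnorm (fun k => lam1 s k * p k)) := rfl
      _ ≤ Real.sqrt (((d - 1 : ℕ) : ℝ) * (lamInf lam1 * (2 * cV T ℓ g))^2) :=
          Real.sqrt_le_sqrt h1
      _ = Real.sqrt ((d : ℝ) - 1) * (lamInf lam1 * (2 * cV T ℓ g)) := by
          rw [Real.sqrt_mul (by positivity), Real.sqrt_sq hM_nn]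
          congr 2
          push_cast [Nat.cast_sub (by omega : 1 ≤ d)]
          ring
  -- the minimizer lies in the ball of radius cA
  have hsupA : norm2 a0 ≤ sSup (Set.range fun s' : State d N => norm2 (hatAlpha lam1 ℓ s' 0)) := by
    rw [ha0def]
    exact le_csSup (Set.finite_range _).bddAbove ⟨s, rfl⟩
  have htri : norm2 astar ≤ norm2 a0 + Dn := by
    have h := norm2_add_le a0 (fun k => astar k - a0 k)
    rw [show (fun k => a0 k + (astar k - a0 k)) = astar from funext fun k => by ring] at h
    rw [hDn]
    exact h
  have hfrac : Dn ≤ 2 * Real.sqrt ((d : ℝ) - 1) * lamInf lam1 * cV T ℓ g / γ := by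
    refine hDnle.trans ?_
    rw [show 2 * Real.sqrt ((d : ℝ) - 1) * lamInf lam1 * cV T ℓ g
      = Real.sqrt ((d : ℝ) - 1) * (lamInf lam1 * (2 * cV T ℓ g)) from by ring]
    gcongr
  have hastar_le : norm2 astar ≤ cA T lam1 ℓ g γ := by
    simp only [cA]
    linarith [htri, hsupA, hfrac]
  have hcA_nn : 0 ≤ cA T lam1 ℓ g γ := le_trans (norm2_nonneg astar) hastar_le
  -- final assembly
  have hbddF := hamSet_bddBelow lam0 lam1 ℓ γ hγ hℓconv hℓnn s p
  have hsubset : ((fun a => ℓ s a + ∑ i, (lam0 s i + lam1 s i * a i) * p i) ''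
      {a : Vec d | (∀ i, 0 ≤ a i) ∧ norm2 a ≤ cA T lam1 ℓ g γ})
      ⊆ ((fun a => ℓ s a + ∑ i, (lam0 s i + lam1 s i * a i) * p i) ''
      {a : Vec d | ∀ i, 0 ≤ a i}) :=
    Set.image_mono fun a ha => ha.1
  have hnorm2_zero : norm2 (0 : Vec d) = 0 := by simp [norm2, sqnorm]
  have h0mem : (0 : Vec d) ∈ {a : Vec d | (∀ i, 0 ≤ a i) ∧ norm2 a ≤ cA T lam1 ℓ g γ} := by
    simp only [Set.mem_setOf_eq]
    exact ⟨fun _ => le_rfl, by rw [hnorm2_zero]; exact hcA_nn⟩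
  have hrne : ((fun a => ℓ s a + ∑ i, (lam0 s i + lam1 s i * a i) * p i) ''
      {a : Vec d | (∀ i, 0 ≤ a i) ∧ norm2 a ≤ cA T lam1 ℓ g γ}).Nonempty :=
    ⟨_, Set.mem_image_of_mem _ h0mem⟩
  rw [ham]
  apply le_antisymm
  · exact csInf_le_csInf hbddF hrne hsubset
  · apply le_csInf ⟨_, Set.mem_image_of_mem _
      (show (0 : Vec d) ∈ {a : Vec d | ∀ j, 0 ≤ a j} from fun _ => le_rfl)⟩
    rintro b ⟨a, ha, rfl⟩
    have h1 : sInf ((fun a => ℓ s a + ∑ i, (lam0 s i + lam1 s i * a i) * p i) ''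
        {a : Vec d | (∀ i, 0 ≤ a i) ∧ norm2 a ≤ cA T lam1 ℓ g γ})
        ≤ ℓ s astar + ∑ i, (lam0 s i + lam1 s i * astar i) * p i :=
      csInf_le (hbddF.mono hsubset) (Set.mem_image_of_mem _ ⟨hastar_nn, hastar_le⟩)
    have h2 := hastar_min a ha
    exact h1.trans h2

end NLLGame
end
end

section
/- There exists a constant c₀ > 0 (one may take c₀ = 2√(d−1)‖λ¹‖_∞/γ) such that for all β, β̃ ∈ 𝒜 and all t ∈ [0,T], |α*(β)(t) − α*(β̃)(t)|₂ ≤ c₀ |v^β(t) − v^{β̃}(t)|₂. -/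
open scoped BigOperators Classical

noncomputable section

namespace NLLGame

variable {d N : ℕ}

private lemma argmin_growth {d N : ℕ} (lam1 : State d N → Vec d)
    (ℓ : State d N → Vec d → ℝ) (γ : ℝ) (hγ : 0 < γ)
    (hℓconv : StronglyConvex ℓ γ) (s : State d N) (p : Vec d) (a a' : Vec d)
    (ha : IsArgmin lam1 ℓ s p a) (ha' : ∀ i, 0 ≤ a' i) :
    ℓ s a + ∑ i, lam1 s i * a i * p i + γ * sqnorm (fun i => a' i - a i) ≤
      ℓ s a' + ∑ i, lam1 s i * a' i * p i := by
  set q : ℝ := sqnorm (fun i => a' i - a i) with hq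
  have hq0 : 0 ≤ q := Finset.sum_nonneg fun i _ => sq_nonneg _
  have key : ∀ τ : ℝ, 0 < τ → τ ≤ 1 →
      ℓ s a + ∑ i, lam1 s i * a i * p i + γ * (1 - τ) * q ≤
        ℓ s a' + ∑ i, lam1 s i * a' i * p i := by
    intro τ hτ hτ1
    have hconv := hℓconv s a a' ha.1 ha' τ ⟨hτ.le, hτ1⟩
    have hmin := ha.2 (fun i => τ * a' i + (1 - τ) * a i)
      (fun i => by
        show (0:ℝ) ≤ τ * a' i + (1 - τ) * a i
        have h1 : 0 ≤ τ * a' i := mul_nonneg hτ.le (ha' i)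
        have h2 : 0 ≤ (1 - τ) * a i := mul_nonneg (by linarith) (ha.1 i)
        linarith)
    have hlin : ∑ i, lam1 s i * (τ * a' i + (1 - τ) * a i) * p i =
        τ * ∑ i, lam1 s i * a' i * p i + (1 - τ) * ∑ i, lam1 s i * a i * p i := by
      rw [Finset.mul_sum, Finset.mul_sum, ← Finset.sum_add_distrib]
      exact Finset.sum_congr rfl fun i _ => by ring
    rw [hlin] at hmin
    nlinarith [hmin, hconv, hτ]
  by_contra hcon
  push_neg at hcon
  set ε : ℝ := (ℓ s a + ∑ i, lam1 s i * a i * p i + γ * q -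
      (ℓ s a' + ∑ i, lam1 s i * a' i * p i)) / 2 with hεdef
  have hε : 0 < ε := by simp only [hεdef]; linarith
  have hden : 0 < γ * (q + 1) := by positivity
  set τ : ℝ := min (1/2) (ε / (γ * (q + 1))) with hτdef
  have hτ0 : 0 < τ := lt_min (by norm_num) (div_pos hε hden)
  have hτ1 : τ ≤ 1 := le_trans (min_le_left _ _) (by norm_num)
  have h1 := key τ hτ0 hτ1
  have h2 : τ * (γ * (q + 1)) ≤ ε := by
    have hm := min_le_right (1/2 : ℝ) (ε / (γ * (q + 1)))
    calc τ * (γ * (q + 1)) ≤ (ε / (γ * (q + 1))) * (γ * (q + 1)) :=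
          mul_le_mul_of_nonneg_right hm hden.le
      _ = ε := div_mul_cancel₀ _ hden.ne'
  nlinarith [mul_nonneg hγ.le hτ0.le, mul_nonneg (mul_nonneg hγ.le hτ0.le) hq0]

private lemma argmin_stable {d N : ℕ} (lam1 : State d N → Vec d)
    (ℓ : State d N → Vec d → ℝ) (γ : ℝ) (hγ : 0 < γ)
    (hℓconv : StronglyConvex ℓ γ) (hlam1 : ∀ s i, 0 ≤ lam1 s i)
    (L : ℝ) (hL : ∀ s i, lam1 s i ≤ L)
    (s : State d N) (p p' a a' : Vec d)
    (ha : IsArgmin lam1 ℓ s p a) (ha' : IsArgmin lam1 ℓ s p' a') :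
    sqnorm (fun i => a i - a' i) ≤
      L ^ 2 / (4 * γ ^ 2) * sqnorm (fun i => p i - p' i) := by
  set q : ℝ := sqnorm (fun i => a i - a' i) with hqdef
  set qp : ℝ := sqnorm (fun i => p i - p' i) with hqpdef
  have hq0 : 0 ≤ q := Finset.sum_nonneg fun i _ => sq_nonneg _
  have h1 := argmin_growth lam1 ℓ γ hγ hℓconv s p a a' ha ha'.1
  have h2 := argmin_growth lam1 ℓ γ hγ hℓconv s p' a' a ha' ha.1
  have hsym : sqnorm (fun i => a' i - a i) = q := by
    simp only [hqdef, sqnorm]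
    exact Finset.sum_congr rfl fun i _ => by ring
  rw [hsym] at h1
  have h2q : sqnorm (fun i => a i - a' i) = q := rfl
  rw [h2q] at h2
  have hS : 2 * γ * q ≤ ∑ i, lam1 s i * (a' i - a i) * (p i - p' i) := by
    have hsum : ∑ i, lam1 s i * (a' i - a i) * (p i - p' i) =
        (∑ i, lam1 s i * a' i * p i) - (∑ i, lam1 s i * a i * p i) -
        ((∑ i, lam1 s i * a' i * p' i) - (∑ i, lam1 s i * a i * p' i)) := by
      rw [← Finset.sum_sub_distrib, ← Finset.sum_sub_distrib, ← Finset.sum_sub_distrib]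
      exact Finset.sum_congr rfl fun i _ => by ring
    rw [hsum]; linarith
  have hterm : ∀ i, 4 * γ * (lam1 s i * (a' i - a i) * (p i - p' i)) ≤
      4 * γ ^ 2 * (a' i - a i) ^ 2 + L ^ 2 * (p i - p' i) ^ 2 := by
    intro i
    have h0 := hlam1 s i
    have hLi := hL s i
    nlinarith [sq_nonneg (2 * γ * (a' i - a i) - lam1 s i * (p i - p' i)),
      sq_nonneg (p i - p' i), mul_le_mul hLi hLi h0 (le_trans h0 hLi)]
  have hS2 : 4 * γ * (∑ i, lam1 s i * (a' i - a i) * (p i - p' i)) ≤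
      4 * γ ^ 2 * q + L ^ 2 * qp := by
    rw [Finset.mul_sum]
    calc ∑ i, 4 * γ * (lam1 s i * (a' i - a i) * (p i - p' i))
        ≤ ∑ i, (4 * γ ^ 2 * (a' i - a i) ^ 2 + L ^ 2 * (p i - p' i) ^ 2) :=
          Finset.sum_le_sum fun i _ => hterm i
      _ = 4 * γ ^ 2 * sqnorm (fun i => a' i - a i) + L ^ 2 * qp := by
          rw [Finset.sum_add_distrib, ← Finset.mul_sum, ← Finset.mul_sum]
          rfl
      _ = 4 * γ ^ 2 * q + L ^ 2 * qp := by rw [hsym]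
  have hmul : 4 * γ * (2 * γ * q) ≤
      4 * γ * (∑ i, lam1 s i * (a' i - a i) * (p i - p' i)) :=
    mul_le_mul_of_nonneg_left hS (by positivity)
  have hfin : 4 * γ ^ 2 * q ≤ L ^ 2 * qp := by nlinarith
  rw [div_mul_eq_mul_div, le_div_iff₀ (by positivity : (0:ℝ) < 4 * γ ^ 2)]
  linarith

theorem stmt8_bestresponse_lipschitz_in_value
    {d N : ℕ} (hd : 2 ≤ d) (hN : 1 ≤ N) (T : ℝ) (hT : 0 < T)
    (lam0 lam1 : State d N → Vec d)
    (hlam0 : ∀ s i, 0 ≤ lam0 s i) (hlam1 : ∀ s i, 0 ≤ lam1 s i)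
    (ℓ : State d N → Vec d → ℝ) (γ : ℝ) (hγ : 0 < γ)
    (hℓc : ∀ s, Continuous (ℓ s))
    (hℓnn : ∀ s a, (∀ i, 0 ≤ a i) → 0 ≤ ℓ s a)
    (hℓconv : StronglyConvex ℓ γ)
    (g : State d N → ℝ) (hg : ∀ s, 0 ≤ g s)
 :
    ∃ c₀ : ℝ, 0 < c₀ ∧ ∀ β β' : Ctrl d N, Admissible T β → Admissible T β' →
      ∀ v v' : ℝ → State d N → ℝ,
        IsHJBSol T lam0 lam1 ℓ g β v → IsHJBSol T lam0 lam1 ℓ g β' v' →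
      ∀ αb αb' : Ctrl d N, IsBR T lam1 ℓ v αb → IsBR T lam1 ℓ v' αb' →
      ∀ t ∈ Set.Icc (0:ℝ) T,
        Real.sqrt (ctrlNormSq (fun u s i => αb u s i - αb' u s i) t) ≤
          c₀ * Real.sqrt (valNormSq (fun u s => v u s - v' u s) t) := by
  classical
  set L : ℝ := ∑ s : State d N, ∑ i, lam1 s i with hLdef
  have hL : ∀ s i, lam1 s i ≤ L := by
    intro s i
    have h1 : lam1 s i ≤ ∑ j, lam1 s j :=
      Finset.single_le_sum (fun j _ => hlam1 s j) (Finset.mem_univ i)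
    have h2 : ∑ j, lam1 s j ≤ L :=
      Finset.single_le_sum (f := fun s' => ∑ j, lam1 s' j)
        (fun s' _ => Finset.sum_nonneg fun j _ => hlam1 s' j) (Finset.mem_univ s)
    linarith
  set C : ℝ := L ^ 2 / (4 * γ ^ 2) *
      (4 * ((d - 1 : ℕ) : ℝ) * (Fintype.card (State d N) : ℝ)) with hCdef
  have hC0 : 0 ≤ C := by positivity
  refine ⟨Real.sqrt C + 1, by positivity, ?_⟩
  intro β β' hβ hβ' v v' hv hv' αb αb' hBR hBR' t ht
  set w : State d N → ℝ := fun s => v t s - v' t s with hwdef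
  set V : ℝ := ∑ s : State d N, w s ^ 2 with hVdef
  have hV0 : 0 ≤ V := Finset.sum_nonneg fun s _ => sq_nonneg _
  have hwle : ∀ s, w s ^ 2 ≤ V := fun s =>
    Finset.single_le_sum (f := fun s' => w s' ^ 2) (fun s' _ => sq_nonneg _)
      (Finset.mem_univ s)
  have hstate : ∀ s : State d N,
      ∑ i, (αb t s i - αb' t s i) ^ 2 ≤
        L ^ 2 / (4 * γ ^ 2) * (4 * ((d - 1 : ℕ) : ℝ) * V) := by
    intro s
    have hstab := argmin_stable lam1 ℓ γ hγ hℓconv hlam1 L hL s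
      (delta s.1 fun y => v t (y, s.2)) (delta s.1 fun y => v' t (y, s.2))
      (αb t s) (αb' t s) (hBR t ht s) (hBR' t ht s)
    have hp : sqnorm (fun i => delta s.1 (fun y => v t (y, s.2)) i -
        delta s.1 (fun y => v' t (y, s.2)) i) ≤ 4 * ((d - 1 : ℕ) : ℝ) * V := by
      have hterm : ∀ i : Fin (d - 1), (delta s.1 (fun y => v t (y, s.2)) i -
          delta s.1 (fun y => v' t (y, s.2)) i) ^ 2 ≤ 4 * V := by
        intro i
        have heq : delta s.1 (fun y => v t (y, s.2)) i -
            delta s.1 (fun y => v' t (y, s.2)) i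
            = w (idxToState s.1 i, s.2) - w (s.1, s.2) := by
          simp only [delta, hwdef]; ring
        rw [heq]
        nlinarith [hwle (idxToState s.1 i, s.2), hwle (s.1, s.2),
          sq_nonneg (w (idxToState s.1 i, s.2) + w (s.1, s.2))]
      calc sqnorm (fun i => delta s.1 (fun y => v t (y, s.2)) i -
              delta s.1 (fun y => v' t (y, s.2)) i)
          ≤ ∑ _i : Fin (d - 1), 4 * V := Finset.sum_le_sum fun i _ => hterm i
        _ = ((d - 1 : ℕ) : ℝ) * (4 * V) := by
            simp [Finset.sum_const, nsmul_eq_mul]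
        _ = 4 * ((d - 1 : ℕ) : ℝ) * V := by ring
    calc ∑ i, (αb t s i - αb' t s i) ^ 2
        ≤ L ^ 2 / (4 * γ ^ 2) * sqnorm (fun i => delta s.1 (fun y => v t (y, s.2)) i -
            delta s.1 (fun y => v' t (y, s.2)) i) := hstab
      _ ≤ L ^ 2 / (4 * γ ^ 2) * (4 * ((d - 1 : ℕ) : ℝ) * V) :=
          mul_le_mul_of_nonneg_left hp (by positivity)
  have hctrl : ctrlNormSq (fun u s i => αb u s i - αb' u s i) t ≤ C * V := by
    calc ctrlNormSq (fun u s i => αb u s i - αb' u s i) t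
        = ∑ s : State d N, ∑ i, (αb t s i - αb' t s i) ^ 2 := rfl
      _ ≤ ∑ _s : State d N, L ^ 2 / (4 * γ ^ 2) * (4 * ((d - 1 : ℕ) : ℝ) * V) :=
          Finset.sum_le_sum fun s _ => hstate s
      _ = (Fintype.card (State d N) : ℝ) *
            (L ^ 2 / (4 * γ ^ 2) * (4 * ((d - 1 : ℕ) : ℝ) * V)) := by
          simp [Finset.sum_const, nsmul_eq_mul, Finset.card_univ]
      _ = C * V := by rw [hCdef]; ring
  have hVeq : valNormSq (fun u s => v u s - v' u s) t = V := rfl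
  have hs1 : Real.sqrt (ctrlNormSq (fun u s i => αb u s i - αb' u s i) t) ≤
      Real.sqrt (C * V) := Real.sqrt_le_sqrt hctrl
  rw [hVeq]
  calc Real.sqrt (ctrlNormSq (fun u s i => αb u s i - αb' u s i) t)
      ≤ Real.sqrt (C * V) := hs1
    _ = Real.sqrt C * Real.sqrt V := Real.sqrt_mul hC0 V
    _ ≤ (Real.sqrt C + 1) * Real.sqrt V := by
        have := Real.sqrt_nonneg V
        nlinarith

end NLLGame
end
end
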